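/- Let m be an even positive integer and define H_1 = {A : A is an m-th order n-dimensional real symmetric tensor with A − N(A) positive semi-definite}. Then H_1 is a convex cone of symmetric tensors, and N^+_{m,n} ⊆ H_1 ⊆ COP_{m,n}, where N^+_{m,n} is the set of m-th order n-dimensional symmetric tensors with all entries nonnegative and COP_{m,n} is the set of m-th order n-dimensional symmetric copositive tensors. -/

import Mathlib

open scoped BigOperators

/-- `A x^m`: the homogeneous form of an `m`-th order `n`-dimensional tensor. -/
def tApply {m n : ℕ} (A : (Fin m → Fin n) → ℝ) (x : Fin n → ℝ) : ℝ :=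
  ∑ i : Fin m → Fin n, A i * ∏ t, x (i t)

/-- A tensor is symmetric if its entries are invariant under permutations of indices. -/
def IsSymT {m n : ℕ} (A : (Fin m → Fin n) → ℝ) : Prop :=
  ∀ (σ : Equiv.Perm (Fin m)) (i : Fin m → Fin n), A (i ∘ σ) = A i

/-- Copositivity: `A x^m ≥ 0` for all `x` in the nonnegative orthant. -/
def Copositive {m n : ℕ} (A : (Fin m → Fin n) → ℝ) : Prop :=
  ∀ x : Fin n → ℝ, (∀ j, 0 ≤ x j) → 0 ≤ tApply A x

/-- Positive semi-definiteness (for even order): `A x^m ≥ 0` for all `x ∈ ℝ^n`. -/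
def PSDT {m n : ℕ} (A : (Fin m → Fin n) → ℝ) : Prop :=
  ∀ x : Fin n → ℝ, 0 ≤ tApply A x

/-- `N(A)`: keeps the positive off-diagonal entries of `A` and sets all the other
entries to `0`. -/
noncomputable def NPart {m n : ℕ} (A : (Fin m → Fin n) → ℝ) : (Fin m → Fin n) → ℝ :=
  fun i => if 0 < A i ∧ (∃ s t, i s ≠ i t) then A i else 0

/-!
Call `D` a Z-tensor if its off-diagonal entries are nonpositive. For even `m`, every diagonal
monomial `∏ₜ x (i t)` is nonnegative, so replacing `x` by `|x|` can only decrease `D x^m`;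
hence a Z-tensor is positive semi-definite exactly when it is copositive. Since `A - N(A)` is
a Z-tensor, membership in `H_1` is a copositivity condition, and the convexity of
`t ↦ max t 0` gives `N(a A + b B) ≤ a N(A) + b N(B)` entrywise, which makes `H_1` closed
under nonnegative combinations. Both inclusions follow from `N(A) ≥ 0`, and from
`A - N(A) ≥ 0` when `A ≥ 0`.
-/

section

variable {m n : ℕ}

def IsZTensor (D : (Fin m → Fin n) → ℝ) : Prop :=
  ∀ i : Fin m → Fin n, (∃ s t, i s ≠ i t) → D i ≤ 0

lemma IsSymT.add {A B : (Fin m → Fin n) → ℝ} (hA : IsSymT A) (hB : IsSymT B) :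
    IsSymT (A + B) := fun σ i => by
  simp only [Pi.add_apply, hA σ i, hB σ i]

lemma IsSymT.smul {A : (Fin m → Fin n) → ℝ} (hA : IsSymT A) (c : ℝ) : IsSymT (c • A) :=
  fun σ i => by simp only [Pi.smul_apply, hA σ i]

lemma tApply_add (A B : (Fin m → Fin n) → ℝ) (x : Fin n → ℝ) :
    tApply (A + B) x = tApply A x + tApply B x := by
  simp only [tApply, Pi.add_apply, add_mul, Finset.sum_add_distrib]

lemma tApply_smul (c : ℝ) (A : (Fin m → Fin n) → ℝ) (x : Fin n → ℝ) :
    tApply (c • A) x = c * tApply A x := by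
  simp only [tApply, Pi.smul_apply, smul_eq_mul, mul_assoc, Finset.mul_sum]

lemma tApply_mono {D E : (Fin m → Fin n) → ℝ} (h : ∀ i, D i ≤ E i) {x : Fin n → ℝ}
    (hx : ∀ j, 0 ≤ x j) : tApply D x ≤ tApply E x :=
  Finset.sum_le_sum fun i _ =>
    mul_le_mul_of_nonneg_right (h i) (Finset.prod_nonneg fun _ _ => hx _)

lemma copositive_of_nonneg {A : (Fin m → Fin n) → ℝ} (hA : ∀ i, 0 ≤ A i) : Copositive A :=
  fun _ hx => Finset.sum_nonneg fun i _ =>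
    mul_nonneg (hA i) (Finset.prod_nonneg fun _ _ => hx _)

lemma Copositive.add {A B : (Fin m → Fin n) → ℝ} (hA : Copositive A) (hB : Copositive B) :
    Copositive (A + B) := fun x hx => by
  rw [tApply_add]
  exact add_nonneg (hA x hx) (hB x hx)

lemma PSDT.copositive {A : (Fin m → Fin n) → ℝ} (hA : PSDT A) : Copositive A :=
  fun x _ => hA x

lemma prod_nonneg_of_even_of_forall_eq (hm : Even m) {f : Fin m → ℝ}
    (hf : ∀ s t, f s = f t) : 0 ≤ ∏ t, f t := by
  rcases Nat.eq_zero_or_pos m with rfl | hm0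
  · simp
  · rw [Finset.prod_congr rfl fun t _ => hf t ⟨0, hm0⟩, Finset.prod_const, Finset.card_univ,
      Fintype.card_fin]
    exact hm.pow_nonneg _

lemma IsZTensor.tApply_abs_le (hm : Even m) {D : (Fin m → Fin n) → ℝ} (hD : IsZTensor D)
    (x : Fin n → ℝ) : tApply D (fun j => |x j|) ≤ tApply D x := by
  refine Finset.sum_le_sum fun i _ => ?_
  rw [← Finset.abs_prod]
  by_cases hi : ∃ s t, i s ≠ i t
  · exact mul_le_mul_of_nonpos_left (le_abs_self _) (hD i hi)
  · push Not at hi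
    rw [abs_of_nonneg (prod_nonneg_of_even_of_forall_eq hm fun s t => congrArg x (hi s t))]

lemma IsZTensor.psdt_iff_copositive (hm : Even m) {D : (Fin m → Fin n) → ℝ}
    (hD : IsZTensor D) : PSDT D ↔ Copositive D :=
  ⟨PSDT.copositive, fun hcop x =>
    (hcop _ fun j => abs_nonneg (x j)).trans (hD.tApply_abs_le hm x)⟩

lemma NPart_nonneg (A : (Fin m → Fin n) → ℝ) (i : Fin m → Fin n) : 0 ≤ NPart A i := by
  unfold NPart
  split_ifs with h
  exacts [h.1.le, le_rfl]

lemma le_NPart (A : (Fin m → Fin n) → ℝ) {i : Fin m → Fin n} (hi : ∃ s t, i s ≠ i t) :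
    A i ≤ NPart A i := by
  unfold NPart
  split_ifs with h
  · exact le_rfl
  · exact not_lt.mp fun hpos => h ⟨hpos, hi⟩

lemma isZTensor_sub_NPart (A : (Fin m → Fin n) → ℝ) : IsZTensor (A - NPart A) :=
  fun _ hi => sub_nonpos.mpr (le_NPart A hi)

lemma NPart_le_self {A : (Fin m → Fin n) → ℝ} {i : Fin m → Fin n} (hA : 0 ≤ A i) :
    NPart A i ≤ A i := by
  unfold NPart
  split_ifs
  exacts [le_rfl, hA]

lemma sub_NPart_nonneg {A : (Fin m → Fin n) → ℝ} (hA : ∀ i, 0 ≤ A i) (i : Fin m → Fin n) :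
    0 ≤ (A - NPart A) i :=
  sub_nonneg.mpr (NPart_le_self (hA i))

lemma NPart_add_smul_le {A B : (Fin m → Fin n) → ℝ} {a b : ℝ} (ha : 0 ≤ a) (hb : 0 ≤ b)
    (i : Fin m → Fin n) : NPart (a • A + b • B) i ≤ a * NPart A i + b * NPart B i := by
  rw [NPart]
  split_ifs with h
  · exact add_le_add (mul_le_mul_of_nonneg_left (le_NPart A h.2) ha)
      (mul_le_mul_of_nonneg_left (le_NPart B h.2) hb)
  · exact add_nonneg (mul_nonneg ha (NPart_nonneg A i)) (mul_nonneg hb (NPart_nonneg B i))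

lemma psdt_sub_NPart_add_smul (hm : Even m) {A B : (Fin m → Fin n) → ℝ} {a b : ℝ}
    (ha : 0 ≤ a) (hb : 0 ≤ b) (hA : PSDT (A - NPart A)) (hB : PSDT (B - NPart B)) :
    PSDT (a • A + b • B - NPart (a • A + b • B)) := by
  rw [(isZTensor_sub_NPart _).psdt_iff_copositive hm]
  intro y hy
  have hle : ∀ i, (a • (A - NPart A) + b • (B - NPart B)) i
      ≤ (a • A + b • B - NPart (a • A + b • B)) i := fun i => by
    have := NPart_add_smul_le (A := A) (B := B) ha hb i
    simp only [Pi.add_apply, Pi.sub_apply, Pi.smul_apply, smul_eq_mul]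
    linarith
  calc 0 ≤ a * tApply (A - NPart A) y + b * tApply (B - NPart B) y :=
        add_nonneg (mul_nonneg ha (hA y)) (mul_nonneg hb (hB y))
    _ = tApply (a • (A - NPart A) + b • (B - NPart B)) y := by
        rw [tApply_add, tApply_smul, tApply_smul]
    _ ≤ _ := tApply_mono hle hy

end

theorem stmt7_general (m n : ℕ) (hm : Even m)
    (H1 : Set ((Fin m → Fin n) → ℝ))
    (hH1 : H1 = {A | IsSymT A ∧ PSDT (A - NPart A)}) :
    Convex ℝ H1 ∧ (∀ (c : ℝ), 0 ≤ c → ∀ A ∈ H1, c • A ∈ H1) ∧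
      {A : (Fin m → Fin n) → ℝ | IsSymT A ∧ ∀ i, 0 ≤ A i} ⊆ H1 ∧
      H1 ⊆ {A : (Fin m → Fin n) → ℝ | IsSymT A ∧ Copositive A} := by
  have hcomb : ∀ A ∈ H1, ∀ B ∈ H1, ∀ a b : ℝ, 0 ≤ a → 0 ≤ b → a • A + b • B ∈ H1 := by
    subst hH1
    exact fun A hA B hB a b ha hb =>
      ⟨(hA.1.smul a).add (hB.1.smul b), psdt_sub_NPart_add_smul hm ha hb hA.2 hB.2⟩
  subst hH1
  refine ⟨fun A hA B hB a b ha hb _ => hcomb A hA B hB a b ha hb,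
    fun c hc A hA => by simpa using hcomb A hA A hA c 0 hc le_rfl,
    fun A hA => ⟨hA.1, ?_⟩, fun A hA => ⟨hA.1, ?_⟩⟩
  · exact ((isZTensor_sub_NPart A).psdt_iff_copositive hm).mpr
      (copositive_of_nonneg (sub_NPart_nonneg hA.2))
  · simpa using hA.2.copositive.add (copositive_of_nonneg (NPart_nonneg A))

theorem stmt7 (m n : ℕ) (hm : Even m) (hm0 : 0 < m)
    (H1 : Set ((Fin m → Fin n) → ℝ))
    (hH1 : H1 = {A | IsSymT A ∧ PSDT (A - NPart A)}) :
    Convex ℝ H1 ∧ (∀ (c : ℝ), 0 ≤ c → ∀ A ∈ H1, c • A ∈ H1) ∧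
      {A : (Fin m → Fin n) → ℝ | IsSymT A ∧ ∀ i, 0 ≤ A i} ⊆ H1 ∧
      H1 ⊆ {A : (Fin m → Fin n) → ℝ | IsSymT A ∧ Copositive A} :=
  stmt7_general m n hm H1 hH1
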